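/- Let y₁, …, y_n ∈ M be distinct points and k₁, …, k_n positive integers with k₁ + ⋯ + k_n = d, and set 𝔪_Y = (𝔪_{y₁})^{k₁} ∩ ⋯ ∩ (𝔪_{y_n})^{k_n}. Let F be a finite-dimensional linear subspace of R = C^∞(M,ℝ) with F + 𝔪_Y = R, and let L ⊆ F be a linear subspace of codimension d in F. Then there exists an ideal I of R with dim_ℝ(R/I) = d, 𝔪_Y ⊆ I and L = F ∩ I if and only if both (1) F ∩ 𝔪_Y ⊆ L, and (2) for all p ∈ F and g ∈ L, the product p·g lies in 𝔪_Y + L. In that case 𝔪_Y + L is an ideal of R and I = 𝔪_Y + L. -/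

import Mathlib

open scoped Manifold
open Module Filter Topology

noncomputable section

/-- The ℝ-algebra of smooth real-valued functions on a manifold `M` modelled on `ℝ^m`. -/
abbrev SmoothFns (m : ℕ) (M : Type*) [TopologicalSpace M]
    [ChartedSpace (EuclideanSpace ℝ (Fin m)) M] : Type _ :=
  C^(⊤ : ℕ∞)⟮𝓡 m, M; 𝓘(ℝ, ℝ), ℝ⟯

variable {m : ℕ} {M : Type*} [TopologicalSpace M] [T2Space M] [SecondCountableTopology M]
  [ChartedSpace (EuclideanSpace ℝ (Fin m)) M] [IsManifold (𝓡 m) (⊤ : ℕ∞) M]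

/-- The ideal `𝔪ₓ` of smooth functions vanishing at the point `x`. -/
def mIdeal (x : M) : Ideal (SmoothFns m M) where
  carrier := {f | f x = 0}
  add_mem' := by intro f g hf hg; simp_all
  zero_mem' := by simp
  smul_mem' := by intro c f hf; simp_all

/-- The ideal `𝔫ₓ` of smooth functions vanishing on some neighbourhood of the point `x`. -/
def nIdeal (x : M) : Ideal (SmoothFns m M) where
  carrier := {f | ∀ᶠ y in 𝓝 x, f y = 0}
  add_mem' := by
    intro f g hf hg
    filter_upwards [hf, hg] with y h1 h2
    simp [h1, h2]
  zero_mem' := by filter_upwards with y; simp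
  smul_mem' := by
    intro c f hf
    filter_upwards [hf] with y h
    simp [h]

/-- The spectrum of an ideal: the set of common zeros of its elements. -/
def idealSpec (I : Ideal (SmoothFns m M)) : Set M :=
  {x : M | ∀ f ∈ I, f x = 0}

/-- The ideal `𝔪_Y = (𝔪_{y 1})^{k 1} ∩ ⋯ ∩ (𝔪_{y n})^{k n}` associated to points with
weights. -/
def mYIdeal (n : ℕ) (y : Fin n → M) (k : Fin n → ℕ) : Ideal (SmoothFns m M) :=
  ⨅ i, (mIdeal (y i)) ^ (k i)

/-
Let `J = 𝔪_Y + L`. Since `F + 𝔪_Y = R` and `F ∩ 𝔪_Y ⊆ L ⊆ F`, the modular law gives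
`F ∩ J = L`, so `F → R/J` induces `F/L ≅ R/J` and `J` has codimension `d`. The condition
`F·L ⊆ J` makes `J` an `R`-submodule, because every `a ∈ R` is `p + w` with `p ∈ F`, `w ∈ 𝔪_Y`.
Conversely an ideal `I ⊇ 𝔪_Y` with `F ∩ I = L` contains `J`, and both have codimension `d`,
so `I = J` and `F·L ⊆ I = J`.
-/

namespace Submodule

variable {K V : Type*}

section Ring

variable [Ring K] [AddCommGroup V] [Module K V]

theorem inf_sup_eq_of_inf_le {F W L : Submodule K V} (hL : L ≤ F) (hWL : F ⊓ W ≤ L) :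
    F ⊓ (W ⊔ L) = L := by
  rw [inf_comm, sup_comm, sup_inf_assoc_of_le W hL, inf_comm W, sup_eq_left.mpr hWL]

def quotientComapSubtypeEquivOfSupEqTop (F J : Submodule K V) (h : F ⊔ J = ⊤) :
    (F ⧸ J.comap F.subtype) ≃ₗ[K] V ⧸ J :=
  have hsurj : Function.Surjective (J.mkQ ∘ₗ F.subtype) := by
    rw [← LinearMap.range_eq_top, LinearMap.range_comp, range_subtype, map_mkQ_eq_top, sup_comm, h]
  (quotEquivOfEq _ _ (by rw [LinearMap.ker_comp, ker_mkQ])).trans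
    ((J.mkQ ∘ₗ F.subtype).quotKerEquivOfSurjective hsurj)

def quotientSupEquivOfInfLe {F W L : Submodule K V} (hFW : F ⊔ W = ⊤) (hL : L ≤ F)
    (hWL : F ⊓ W ≤ L) : (V ⧸ (W ⊔ L)) ≃ₗ[K] F ⧸ L.comap F.subtype :=
  have hcomap : (W ⊔ L).comap F.subtype = L.comap F.subtype := by
    conv_rhs => rw [← inf_sup_eq_of_inf_le hL hWL]
    rw [comap_inf, comap_subtype_self, top_inf_eq]
  (quotientComapSubtypeEquivOfSupEqTop F (W ⊔ L) (by rw [← sup_assoc, hFW, top_sup_eq])).symm.trans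
    (quotEquivOfEq _ _ hcomap)

end Ring

theorem eq_of_le_of_finrank_quotient_eq [DivisionRing K] [AddCommGroup V] [Module K V]
    {J I : Submodule K V} [FiniteDimensional K (V ⧸ J)] (hJI : J ≤ I)
    (hrank : finrank K (V ⧸ J) = finrank K (V ⧸ I)) : J = I := by
  have : FiniteDimensional K (V ⧸ I) := Module.Finite.of_surjective _ (factor_surjective hJI)
  have hinj : Function.Injective (factor hJI) :=
    (LinearMap.injective_iff_surjective_of_finrank_eq_finrank hrank).mpr (factor_surjective hJI)
  refine le_antisymm hJI fun x hx => ?_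
  have hx0 : factor hJI (Quotient.mk x) = factor hJI 0 := by
    rw [map_zero]
    exact (Quotient.mk_eq_zero I).mpr hx
  exact (Quotient.mk_eq_zero J).mp (hinj hx0)

end Submodule

section Algebra

variable {K A : Type*} [Field K] [CommRing A] [Algebra K A]

theorem Ideal.exists_restrictScalars_eq (J : Submodule K A) (hJ : ∀ (a : A), ∀ x ∈ J, a * x ∈ J) :
    ∃ I : Ideal A, I.restrictScalars K = J :=
  ⟨{ J with smul_mem' := hJ }, rfl⟩

variable {Q : Ideal A} {F L : Submodule K A}

theorem mul_mem_sup_of_mul_mem (hF : F ⊔ Q.restrictScalars K = ⊤)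
    (hmul : ∀ p ∈ F, ∀ g ∈ L, p * g ∈ Q.restrictScalars K ⊔ L) (a : A) {x : A}
    (hx : x ∈ Q.restrictScalars K ⊔ L) : a * x ∈ Q.restrictScalars K ⊔ L := by
  obtain ⟨p, hp, w, hw, rfl⟩ := Submodule.mem_sup.mp (hF ▸ Submodule.mem_top : a ∈ F ⊔ _)
  obtain ⟨v, hv, g, hg, rfl⟩ := Submodule.mem_sup.mp hx
  have hQ : p * v + w * (v + g) ∈ Q := Q.add_mem (Q.mul_mem_left p hv) (Q.mul_mem_right _ hw)
  rw [show (p + w) * (v + g) = (p * v + w * (v + g)) + p * g by ring]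
  exact Submodule.add_mem _ (Submodule.mem_sup_left hQ) (hmul p hp g hg)

theorem Ideal.exists_restrictScalars_eq_sup [FiniteDimensional K F]
    (hF : F ⊔ Q.restrictScalars K = ⊤) (hL : L ≤ F) (hQL : F ⊓ Q.restrictScalars K ≤ L)
    (hmul : ∀ p ∈ F, ∀ g ∈ L, p * g ∈ Q.restrictScalars K ⊔ L) :
    ∃ I : Ideal A, I.restrictScalars K = Q.restrictScalars K ⊔ L ∧
      FiniteDimensional K (A ⧸ I) ∧ finrank K (A ⧸ I) = finrank K (F ⧸ L.comap F.subtype) ∧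
      Q ≤ I ∧ L = F ⊓ I.restrictScalars K := by
  obtain ⟨I, hI⟩ := Ideal.exists_restrictScalars_eq _ (mul_mem_sup_of_mul_mem hF hmul)
  let e : (A ⧸ I) ≃ₗ[K] F ⧸ L.comap F.subtype :=
    (Submodule.Quotient.restrictScalarsEquiv K I).symm ≪≫ₗ Submodule.quotEquivOfEq _ _ hI ≪≫ₗ
      Submodule.quotientSupEquivOfInfLe hF hL hQL
  refine ⟨I, hI, Module.Finite.equiv e.symm, e.finrank_eq, fun x hx => ?_, ?_⟩
  · change x ∈ I.restrictScalars K
    exact hI ▸ Submodule.mem_sup_left hx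
  · rw [hI, Submodule.inf_sup_eq_of_inf_le hL hQL]

theorem Ideal.restrictScalars_eq_sup_of_inf_eq [FiniteDimensional K F]
    (hF : F ⊔ Q.restrictScalars K = ⊤) (hL : L ≤ F) {I : Ideal A}
    (hrank : finrank K (A ⧸ I) = finrank K (F ⧸ L.comap F.subtype)) (hQI : Q ≤ I)
    (hLI : L = F ⊓ I.restrictScalars K) :
    I.restrictScalars K = Q.restrictScalars K ⊔ L := by
  have hQI' : Q.restrictScalars K ≤ I.restrictScalars K := Submodule.restrictScalars_mono K hQI
  have hQL : F ⊓ Q.restrictScalars K ≤ L := hLI ▸ inf_le_inf_left F hQI'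
  let e := Submodule.quotientSupEquivOfInfLe hF hL hQL
  have : FiniteDimensional K (A ⧸ (Q.restrictScalars K ⊔ L)) := Module.Finite.equiv e.symm
  refine (Submodule.eq_of_le_of_finrank_quotient_eq (sup_le hQI' (hLI ▸ inf_le_right)) ?_).symm
  rw [e.finrank_eq, ← hrank, (Submodule.Quotient.restrictScalarsEquiv K I).finrank_eq]

end Algebra

theorem exists_ideal_with_trace_iff
    (n d : ℕ) (y : Fin n → M)
    (k : Fin n → ℕ)
    (F : Submodule ℝ (SmoothFns m M)) (hFfd : FiniteDimensional ℝ F)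
    (hF : F ⊔ (mYIdeal n y k).restrictScalars ℝ = ⊤)
    (L : Submodule ℝ (SmoothFns m M)) (hL : L ≤ F)
    (hLcodim : Module.finrank ℝ (F ⧸ (L.comap F.subtype)) = d) :
    ((∃ I : Ideal (SmoothFns m M), FiniteDimensional ℝ (SmoothFns m M ⧸ I) ∧
        Module.finrank ℝ (SmoothFns m M ⧸ I) = d ∧ mYIdeal n y k ≤ I ∧
        L = F ⊓ I.restrictScalars ℝ) ↔
      (F ⊓ (mYIdeal n y k).restrictScalars ℝ ≤ L ∧
        ∀ p ∈ F, ∀ g ∈ L, p * g ∈ (mYIdeal n y k).restrictScalars ℝ ⊔ L)) ∧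
    ((F ⊓ (mYIdeal n y k).restrictScalars ℝ ≤ L ∧
        ∀ p ∈ F, ∀ g ∈ L, p * g ∈ (mYIdeal n y k).restrictScalars ℝ ⊔ L) →
      ∃ I : Ideal (SmoothFns m M),
        I.restrictScalars ℝ = (mYIdeal n y k).restrictScalars ℝ ⊔ L ∧
        FiniteDimensional ℝ (SmoothFns m M ⧸ I) ∧
        Module.finrank ℝ (SmoothFns m M ⧸ I) = d ∧ mYIdeal n y k ≤ I ∧
        L = F ⊓ I.restrictScalars ℝ) := by
  subst hLcodim
  refine ⟨⟨?_, fun h => ?_⟩, fun h => Ideal.exists_restrictScalars_eq_sup hF hL h.1 h.2⟩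
  · rintro ⟨I, -, hrank, hQI, hLI⟩
    have hI := Ideal.restrictScalars_eq_sup_of_inf_eq hF hL hrank hQI hLI
    refine ⟨hLI ▸ inf_le_inf_left F (Submodule.restrictScalars_mono ℝ hQI), fun p _ g hg => ?_⟩
    rw [← hI]
    exact I.mul_mem_left p (hLI ▸ hg : g ∈ F ⊓ I.restrictScalars ℝ).2
  · obtain ⟨I, -, hI⟩ := Ideal.exists_restrictScalars_eq_sup hF hL h.1 h.2
    exact ⟨I, hI⟩
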